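/- Let N ≥ 1 and let P be the birth-and-death stochastic matrix on {0,1,…,N} with parameters p_x, q_x, r_x (p_x + q_x + r_x = 1, tridiagonal, q_0 = 0 = p_N) such that p_0 = 0, q_N = 0, p_x > 0 and q_x > 0 for 1 ≤ x ≤ N−1, and the monotonicity condition p_x + q_{x+1} ≤ 1 holds for all x < N. Let Q be the matrix on {0,1,…,N−1} defined by Q(x,x−1) = p_x, Q(x,x) = 1 − p_x − q_{x+1}, Q(x,x+1) = q_{x+1} (indices within {0,…,N−1}; note q_N = 0 so Q(N−1,N−1) = 1 − p_{N−1}), and all other entries 0; Q is a stochastic matrix. Let ρ be a stationary distribution of Q, i.e. ρ has nonnegative entries summing to 1 with ρ·Q = ρ as a row vector. Define the scale function η(x) := Σ_{y=0}^{x−1} Π_{z=1}^{y} (q_z/p_z) for 0 ≤ x ≤ N (so η(0) = 0). Then for every x ∈ {0,1,…,N}: η(x) = η(N)·Σ_{z=0}^{x−1} ρ(z). Equivalently, η(x)/η(N) equals the cumulative mass of ρ strictly below x, and 1 − η(x)/η(N) = Σ_{z≥x} ρ(z). -/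

import Mathlib

/-!
Since `Q` is tridiagonal and `p₀ = 0`, the stationary equations of `Q`, read from the row
`y = 0` upwards, telescope to detailed balance `ρ(y+1) p_{y+1} = ρ(y) q_{y+1}`. Hence
`ρ(y) = ρ(0) ∏_{z=1}^{y} q_z / p_z = ρ(0) (η(y+1) - η(y))`, so the mass of `ρ` below `x` is
`ρ(0) η(x)`, and total mass `1` forces `ρ(0) = 1 / η(N)`.
-/
open Matrix Finset

/-- The dual kernel `Q(x, y)` written with natural-number indices, in terms of the rates of `P`. -/
def siegmundDual (p q : ℕ → ℝ) (x y : ℕ) : ℝ :=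
  if y + 1 = x then p x
  else if y = x then 1 - p x - q (x + 1)
  else if y = x + 1 then q (x + 1)
  else 0

noncomputable def scaleDensity (p q : ℕ → ℝ) (y : ℕ) : ℝ :=
  ∏ z ∈ Icc 1 y, q z / p z

theorem scaleDensity_zero (p q : ℕ → ℝ) : scaleDensity p q 0 = 1 := by
  simp [scaleDensity]

theorem scaleDensity_succ (p q : ℕ → ℝ) (y : ℕ) :
    scaleDensity p q (y + 1) = scaleDensity p q y * (q (y + 1) / p (y + 1)) :=
  prod_Icc_succ_top (by omega) _

section BirthDeath

variable {p q μ : ℕ → ℝ} {n : ℕ}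

theorem siegmundDual_succ_self (y : ℕ) : siegmundDual p q (y + 1) y = p (y + 1) :=
  if_pos rfl

theorem siegmundDual_self (y : ℕ) : siegmundDual p q y y = 1 - p y - q (y + 1) := by
  simp [siegmundDual]

theorem siegmundDual_self_succ (y : ℕ) : siegmundDual p q y (y + 1) = q (y + 1) := by
  rw [siegmundDual, if_neg (by omega), if_neg (by omega), if_pos rfl]

theorem siegmundDual_eq_zero {x y : ℕ} (h₁ : y + 1 ≠ x) (h₂ : y ≠ x) (h₃ : y ≠ x + 1) :
    siegmundDual p q x y = 0 := by
  simp [siegmundDual, h₁, h₂, h₃]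

theorem sum_mul_siegmundDual_zero (hn : 1 < n) :
    ∑ i ∈ range n, μ i * siegmundDual p q i 0 = μ 1 * p 1 + μ 0 * (1 - p 0 - q 1) := by
  rw [← sum_subset (s₁ := {0, 1}) (by intro i; simp; omega) fun i _ hi => by
    simp only [mem_insert, mem_singleton] at hi
    rw [siegmundDual_eq_zero (by omega) (by omega) (by omega), mul_zero]]
  rw [sum_pair zero_ne_one, siegmundDual_self, show siegmundDual p q 1 0 = p 1 from
    siegmundDual_succ_self 0]
  ring

theorem sum_mul_siegmundDual_succ {k : ℕ} (hk : k + 2 < n) :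
    ∑ i ∈ range n, μ i * siegmundDual p q i (k + 1) =
      μ (k + 2) * p (k + 2) + μ (k + 1) * (1 - p (k + 1) - q (k + 2)) + μ k * q (k + 1) := by
  rw [← sum_subset (s₁ := {k, k + 1, k + 2}) (by intro i; simp; omega) fun i _ hi => by
    simp only [mem_insert, mem_singleton] at hi
    rw [siegmundDual_eq_zero (by omega) (by omega) (by omega), mul_zero]]
  rw [sum_insert (by simp), sum_pair (by simp), siegmundDual_self_succ, siegmundDual_self,
    siegmundDual_succ_self]
  ring

theorem detailedBalance_of_stationary (hp0 : p 0 = 0)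
    (hstat : ∀ y, y + 1 < n → ∑ i ∈ range n, μ i * siegmundDual p q i y = μ y) :
    ∀ y, y + 1 < n → μ (y + 1) * p (y + 1) = μ y * q (y + 1) := by
  intro y
  induction y with
  | zero =>
    intro hn
    have h := hstat 0 hn
    rw [sum_mul_siegmundDual_zero hn, hp0] at h
    linarith
  | succ k ih =>
    intro hk
    have h := hstat (k + 1) hk
    rw [sum_mul_siegmundDual_succ hk] at h
    linarith [ih (by omega)]

theorem eq_mul_scaleDensity_of_detailedBalance (hp : ∀ z, 0 < z → z < n → p z ≠ 0)
    (hdb : ∀ y, y + 1 < n → μ (y + 1) * p (y + 1) = μ y * q (y + 1)) :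
    ∀ i < n, μ i = μ 0 * scaleDensity p q i := by
  intro i
  induction i with
  | zero => simp [scaleDensity_zero]
  | succ k ih =>
    intro hk
    rw [scaleDensity_succ, ← mul_assoc, ← ih (by omega), mul_div_assoc',
      eq_div_iff (hp _ k.succ_pos hk), hdb k hk]

end BirthDeath

theorem Fin.sum_filter_val_lt_eq_sum_range {M : Type*} [AddCommMonoid M] {n x : ℕ} (hx : x ≤ n)
    (f : ℕ → M) :
    ∑ z ∈ univ.filter (fun z : Fin n => (z : ℕ) < x), f z = ∑ i ∈ range x, f i := by
  rw [sum_filter, Fin.sum_univ_eq_sum_range (fun i => if i < x then f i else 0), ← sum_filter]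
  congr 1
  ext i
  simp only [mem_filter, mem_range]
  omega

noncomputable def siegmundDualMatrix {N : ℕ} (p q : Fin (N + 1) → ℝ) : Matrix (Fin N) (Fin N) ℝ :=
  Matrix.of fun x y : Fin N =>
    if (y : ℕ) + 1 = (x : ℕ) then p x.castSucc
    else if y = x then 1 - p x.castSucc - q x.succ
    else if (y : ℕ) = (x : ℕ) + 1 then q x.succ
    else 0

theorem siegmundDualMatrix_apply {N : ℕ} (p q : Fin (N + 1) → ℝ) (x y : Fin N) :
    siegmundDualMatrix p q x y =
      siegmundDual (fun z => p (Fin.ofNat (N + 1) z)) (fun z => q (Fin.ofNat (N + 1) z)) x y := by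
  have hcastSucc : Fin.ofNat (N + 1) x = x.castSucc := Fin.ext (by simp)
  have hsucc : Fin.ofNat (N + 1) (x + 1) = x.succ := Fin.ext (by simp)
  simp only [siegmundDualMatrix, siegmundDual, of_apply, hcastSucc, hsucc, Fin.ext_iff]

theorem sum_mul_siegmundDual_of_vecMul_eq {N : ℕ} {p q : Fin (N + 1) → ℝ} {ρ : Fin N → ℝ}
    {μ : ℕ → ℝ} (hμ : ∀ z : Fin N, μ z = ρ z) (hρ : ρ ᵥ* siegmundDualMatrix p q = ρ)
    (y : Fin N) :
    ∑ i ∈ range N, μ i *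
      siegmundDual (fun z => p (Fin.ofNat (N + 1) z)) (fun z => q (Fin.ofNat (N + 1) z)) i y =
      μ y := by
  rw [← Fin.sum_univ_eq_sum_range, hμ, ← hρ]
  simp only [vecMul, dotProduct, hμ, siegmundDualMatrix_apply]

theorem stmt12_general (N : ℕ) (p q : Fin (N+1) → ℝ) (ρ : Fin N → ℝ)
    (hp0 : p 0 = 0)
    (hppos : ∀ x : Fin (N+1), 0 < (x : ℕ) → (x : ℕ) < N → 0 < p x)
    (hρ1 : ∑ z, ρ z = 1)
    (hρQ : ∀ y : Fin N, ∑ x : Fin N,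
      ρ x * (Matrix.of fun x y : Fin N =>
        if (y : ℕ) + 1 = (x : ℕ) then p x.castSucc
        else if y = x then 1 - p x.castSucc - q x.succ
        else if (y : ℕ) = (x : ℕ) + 1 then q x.succ
        else 0) x y = ρ y) :
    let η : ℕ → ℝ := fun x => ∑ y ∈ Finset.range x,
      ∏ z ∈ Finset.Icc 1 y, q (Fin.ofNat (N+1) (z : ℕ)) / p (Fin.ofNat (N+1) (z : ℕ))
    ∀ x : ℕ, x ≤ N →
      η x = η N * ∑ z ∈ Finset.univ.filter (fun z : Fin N => (z : ℕ) < x), ρ z ∧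
      1 - η x / η N = ∑ z ∈ Finset.univ.filter (fun z : Fin N => x ≤ (z : ℕ)), ρ z := by
  intro η x hx
  set μ : ℕ → ℝ := fun i => if h : i < N then ρ ⟨i, h⟩ else 0
  have hμ : ∀ z : Fin N, μ z = ρ z := fun z => dif_pos z.isLt
  set pN : ℕ → ℝ := fun z => p (Fin.ofNat (N + 1) z)
  set qN : ℕ → ℝ := fun z => q (Fin.ofNat (N + 1) z)
  have hbalance := detailedBalance_of_stationary (p := pN) (q := qN) (μ := μ) (n := N) hp0
    fun y hy => sum_mul_siegmundDual_of_vecMul_eq hμ (funext hρQ) ⟨y, by omega⟩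
  have hval : ∀ z < N, ((Fin.ofNat (N + 1) z : Fin (N + 1)) : ℕ) = z :=
    fun z hz => Nat.mod_eq_of_lt (by omega)
  have hμ_eq := eq_mul_scaleDensity_of_detailedBalance (p := pN) (q := qN) (hdb := hbalance)
    fun z hz hzN => (hppos _ (by rwa [hval z hzN]) (by rwa [hval z hzN])).ne'
  have hcum : ∀ m ≤ N, ∑ z ∈ univ.filter (fun z : Fin N => (z : ℕ) < m), ρ z = μ 0 * η m := by
    intro m hm
    simp_rw [← hμ]
    rw [Fin.sum_filter_val_lt_eq_sum_range hm, mul_sum]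
    exact sum_congr rfl fun i hi => hμ_eq i ((mem_range.mp hi).trans_le hm)
  have hnorm : μ 0 * η N = 1 := by
    rw [← hcum N le_rfl, ← hρ1]
    exact sum_congr (filter_true_of_mem fun z _ => z.isLt) fun _ _ => rfl
  have hηN : η N ≠ 0 := right_ne_zero_of_mul_eq_one hnorm
  have hbelow : η x = η N * ∑ z ∈ univ.filter (fun z : Fin N => (z : ℕ) < x), ρ z := by
    rw [hcum x hx]
    linear_combination (-η x) * hnorm
  refine ⟨hbelow, ?_⟩
  rw [hbelow, mul_div_cancel_left₀ _ hηN, ← hρ1,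
    ← sum_filter_add_sum_filter_not univ fun z : Fin N => (z : ℕ) < x]
  simp only [not_lt, add_sub_cancel_left]

/-- Proposition propo4 (matrix form): for a monotone birth-and-death kernel on
`{0,…,N}` with absorbing endpoints (`p₀ = 0`, `q_N = 0`), the scale function `η`
satisfies `η(x) = η(N)·Σ_{z<x} ρ(z)` and `1 − η(x)/η(N) = Σ_{z≥x} ρ(z)`, where `ρ` is
a stationary distribution of the Siegmund dual `Q` restricted to `{0,…,N−1}`. -/
theorem stmt12 (N : ℕ) (hN : 1 ≤ N) (P : Matrix (Fin (N+1)) (Fin (N+1)) ℝ)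
    (p q r : Fin (N+1) → ℝ) (ρ : Fin N → ℝ)
    (hP0 : ∀ x y, 0 ≤ P x y) (hP1 : ∀ x, ∑ y, P x y = 1)
    (htri : ∀ x y : Fin (N+1), ((x : ℕ) + 1 < (y : ℕ) ∨ (y : ℕ) + 1 < (x : ℕ)) → P x y = 0)
    (hup : ∀ x : Fin (N+1), (x : ℕ) < N → P x (x + 1) = p x)
    (hdown : ∀ x : Fin (N+1), 0 < (x : ℕ) → P x (x - 1) = q x)
    (hdiag : ∀ x, P x x = r x)
    (hsum : ∀ x, p x + q x + r x = 1)
    (hq0 : q 0 = 0) (hpN : p (Fin.last N) = 0)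
    (hp0 : p 0 = 0) (hqN : q (Fin.last N) = 0)
    (hppos : ∀ x : Fin (N+1), 0 < (x : ℕ) → (x : ℕ) < N → 0 < p x)
    (hqpos : ∀ x : Fin (N+1), 0 < (x : ℕ) → (x : ℕ) < N → 0 < q x)
    (hmono : ∀ x : Fin (N+1), (x : ℕ) < N → p x + q (x + 1) ≤ 1)
    (hρ0 : ∀ z, 0 ≤ ρ z) (hρ1 : ∑ z, ρ z = 1)
    (hρQ : ∀ y : Fin N, ∑ x : Fin N,
      ρ x * (Matrix.of fun x y : Fin N =>
        if (y : ℕ) + 1 = (x : ℕ) then p x.castSucc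
        else if y = x then 1 - p x.castSucc - q x.succ
        else if (y : ℕ) = (x : ℕ) + 1 then q x.succ
        else 0) x y = ρ y) :
    let η : ℕ → ℝ := fun x => ∑ y ∈ Finset.range x,
      ∏ z ∈ Finset.Icc 1 y, q (Fin.ofNat (N+1) (z : ℕ)) / p (Fin.ofNat (N+1) (z : ℕ))
    ∀ x : ℕ, x ≤ N →
      η x = η N * ∑ z ∈ Finset.univ.filter (fun z : Fin N => (z : ℕ) < x), ρ z ∧
      1 - η x / η N = ∑ z ∈ Finset.univ.filter (fun z : Fin N => x ≤ (z : ℕ)), ρ z :=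
  stmt12_general N p q ρ hp0 hppos hρ1 hρQ
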